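/- Let 𝓡 be a canonical representation mapping for the reduction of G to G' that respects kernel orbits: v₁ occurs in 𝓡(v) iff v₂ occurs in 𝓡(v) whenever v₁ and v₂ lie in the same orbit of ker(p), where p: Aut(G) → Aut(G') is the restriction homomorphism. Then for every ψ ∈ Aut(G) with p(ψ) = φ, the lift satisfies |supp(φ_𝓡)| ≤ |supp(ψ)|. -/

import Mathlib

namespace Sassy

/-- A coloring is equitable if vertices of the same color have the same number of
neighbors in every color class. -/
def Equitable {V C : Type*} (G : SimpleGraph V) (π : V → C) : Prop :=
  ∀ v w, π v = π w → ∀ c : C,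
    {u | G.Adj v u ∧ π u = c}.ncard = {u | G.Adj w u ∧ π u = c}.ncard

/-- `φ` is a color-preserving automorphism of the colored graph `(G, π)`. -/
def IsAut {V C : Type*} (G : SimpleGraph V) (π : V → C) (φ : Equiv.Perm V) : Prop :=
  (∀ v w, G.Adj (φ v) (φ w) ↔ G.Adj v w) ∧ ∀ v, π (φ v) = π v

/-- The automorphism group of a colored graph, as a subgroup of `Equiv.Perm V`. -/
def Aut {V C : Type*} (G : SimpleGraph V) (π : V → C) : Subgroup (Equiv.Perm V) where
  carrier := {φ | IsAut G π φ}
  one_mem' := ⟨fun _ _ => Iff.rfl, fun _ => rfl⟩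
  mul_mem' := by
    rintro a b ⟨ha1, ha2⟩ ⟨hb1, hb2⟩
    refine ⟨fun v w => ?_, fun v => ?_⟩
    · simpa [Equiv.Perm.mul_apply] using (ha1 (b v) (b w)).trans (hb1 v w)
    · simp [Equiv.Perm.mul_apply, ha2, hb2]
  inv_mem' := by
    rintro a ⟨ha1, ha2⟩
    refine ⟨fun v w => ?_, fun v => ?_⟩
    · conv_rhs => rw [← (Equiv.Perm.eq_inv_iff_eq.mp rfl : a (a⁻¹ v) = v), ← (Equiv.Perm.eq_inv_iff_eq.mp rfl : a (a⁻¹ w) = w)]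
      exact (ha1 _ _).symm
    · conv_rhs => rw [← (Equiv.Perm.eq_inv_iff_eq.mp rfl : a (a⁻¹ v) = v)]
      exact (ha2 _).symm

end Sassy

/-!
Write `k := φ_𝓡 ψ⁻¹`; since both `φ_𝓡` and `ψ` restrict to `φ`, `k` lies in `ker p`. If `ψ` fixes
`v`, then `k v = φ_𝓡 v`, so `φ_𝓡 v` lies in the same kernel orbit as `v` and, 𝓡 respecting kernel
orbits, occurs in every representation `𝓡(v')` that `v` occurs in. For `v ∉ V'` occurring at
position `i` of `𝓡(v')`, `φ_𝓡 v` is by construction the entry at position `i` of `𝓡(φ v')`; a vertex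
outside `V'` occurs at most once in all representations, so `φ v' = v'` and `φ_𝓡 v = v`. Hence
`supp(φ_𝓡) ⊆ supp(ψ)`.
-/

namespace Sassy

variable {V : Type*} {V' : Set V} {R : V → List V}

lemma getElem_eq_of_mem_of_notMem
    (hunique : ∀ v, v ∉ V' → ∀ (v₁ v₂ : ↥V') (i j : ℕ)
      (hi : i < (R v₁.1).length) (hj : j < (R v₂.1).length),
      (R v₁.1).get ⟨i, hi⟩ = v → (R v₂.1).get ⟨j, hj⟩ = v → v₁ = v₂ ∧ i = j)
    {v₁ v₂ : V'} {i : ℕ} (h₁ : i < (R v₁).length) (h₂ : i < (R v₂).length)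
    (hnot : (R v₂)[i] ∉ V') (hmem : (R v₂)[i] ∈ R v₁) :
    (R v₂)[i] = (R v₁)[i] := by
  obtain ⟨⟨j, hj⟩, hget⟩ := List.mem_iff_get.mp hmem
  obtain ⟨rfl, rfl⟩ := hunique _ hnot v₂ v₁ i j h₂ hj rfl hget
  rfl

lemma apply_coe_eq_of_getD_rep {f : Equiv.Perm V} {φ : Equiv.Perm V'}
    (hhead : ∀ v ∈ V', ∃ S : List V, R v = v :: S)
    (hrep : ∀ (v' : V') (i : ℕ), i < (R v').length → f ((R v').getD i v') = (R (φ v')).getD i v')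
    (v' : V') : f v' = φ v' := by
  obtain ⟨S, hS⟩ := hhead v' v'.2
  obtain ⟨S', hS'⟩ := hhead (φ v') (φ v').2
  simpa [hS, hS'] using hrep v' 0 (by simp [hS])

lemma apply_notMem_of_restrict {f : Equiv.Perm V} {φ : Equiv.Perm V'}
    (hf : ∀ v' : V', f v' = φ v') {v : V} (hv : v ∉ V') : f v ∉ V' := by
  intro hfv
  obtain ⟨u, hu⟩ := φ.surjective ⟨f v, hfv⟩
  have hfu : f u = f v := by rw [hf, hu]
  exact hv (f.injective hfu ▸ u.2)

lemma support_subset_of_rep {f g : Equiv.Perm V} {φ : Equiv.Perm V'}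
    (hunique : ∀ v, v ∉ V' → ∀ (v₁ v₂ : ↥V') (i j : ℕ)
      (hi : i < (R v₁.1).length) (hj : j < (R v₂.1).length),
      (R v₁.1).get ⟨i, hi⟩ = v → (R v₂.1).get ⟨j, hj⟩ = v → v₁ = v₂ ∧ i = j)
    (hlen : ∀ v' : V', (R (φ v')).length = (R v').length)
    (hrep : ∀ (v' : V') (i : ℕ), i < (R v').length → f ((R v').getD i v') = (R (φ v')).getD i v')
    (hfix : ∀ v, (∀ v' : V', v ∉ R v') → f v = v)
    (hf : ∀ v' : V', f v' = φ v') (hg : ∀ v' : V', g v' = φ v')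
    (hmem : ∀ v, g v = v → ∀ u, v ∈ R u → f v ∈ R u) :
    {v | f v ≠ v} ⊆ {v | g v ≠ v} := by
  intro v hfv hgv
  apply hfv
  by_cases hocc : ∀ v' : V', v ∉ R v'
  · exact hfix v hocc
  obtain ⟨v', hv'⟩ := not_forall_not.mp hocc
  by_cases hvV : v ∈ V'
  · rw [hf ⟨v, hvV⟩, ← hg ⟨v, hvV⟩, hgv]
  obtain ⟨⟨i, hi⟩, rfl⟩ := List.mem_iff_get.mp hv'
  have hi' : i < (R (φ v')).length := hlen v' ▸ hi
  have hfi : f (R v')[i] = (R (φ v'))[i] := by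
    simpa [List.getD_eq_getElem, hi, hi'] using hrep v' i hi
  simp only [List.get_eq_getElem] at hvV hgv ⊢
  rw [hfi]
  refine getElem_eq_of_mem_of_notMem hunique hi hi' ?_ ?_
  · exact hfi ▸ apply_notMem_of_restrict hf hvV
  · exact hfi ▸ hmem _ hgv v' (List.getElem_mem hi)

end Sassy

theorem stmt13_general {V C : Type*} [Fintype V] (G : SimpleGraph V) (π : V → C)
    (V' : Set V) (G' : SimpleGraph V') (π' : V' → C) (R : V → List V)
    (h1 : ∀ v ∈ V', ∃ S : List V, R v = v :: S)
    (h3 : ∀ v, v ∉ V' → ∀ (v₁ v₂ : ↥V') (i j : ℕ)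
      (hi : i < (R v₁.1).length) (hj : j < (R v₂.1).length),
      (R v₁.1).get ⟨i, hi⟩ = v → (R v₂.1).get ⟨j, hj⟩ = v → v₁ = v₂ ∧ i = j)
    (p : ↥(Sassy.Aut G π) →* ↥(Sassy.Aut G' π'))
    (hp_restrict : ∀ (ψ : ↥(Sassy.Aut G π)) (v' : ↥V'), ((p ψ).1 v').1 = ψ.1 v'.1)
    (lift : ↥(Sassy.Aut G' π') → ↥(Sassy.Aut G π))
    (hlen : ∀ (φ : ↥(Sassy.Aut G' π')) (v' : ↥V'),
      (R (φ.1 v').1).length = (R v'.1).length)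
    (hlift_rep : ∀ (φ : ↥(Sassy.Aut G' π')) (v' : ↥V') (i : ℕ), i < (R v'.1).length →
      (lift φ).1 ((R v'.1).getD i v'.1) = (R (φ.1 v').1).getD i v'.1)
    (hlift_fix : ∀ (φ : ↥(Sassy.Aut G' π')) (v : V), (∀ v' : ↥V', v ∉ R v'.1) →
      (lift φ).1 v = v)
    (hrespect : ∀ v₁ v₂ : V, (∃ k ∈ p.ker, k.1 v₁ = v₂) →
      ∀ v : V, (v₁ ∈ R v ↔ v₂ ∈ R v)) :
    ∀ (ψ : ↥(Sassy.Aut G π)) (φ : ↥(Sassy.Aut G' π')), p ψ = φ →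
      {v : V | (lift φ).1 v ≠ v}.ncard ≤ {v : V | ψ.1 v ≠ v}.ncard := by
  rintro ψ φ rfl
  have hlift : ∀ v' : V', (lift (p ψ)).1 v' = (p ψ).1 v' :=
    Sassy.apply_coe_eq_of_getD_rep h1 (hlift_rep _)
  have hp_lift : p (lift (p ψ)) = p ψ :=
    Subtype.ext <| Equiv.ext fun v' => Subtype.ext <| (hp_restrict _ v').trans (hlift v')
  have hker : lift (p ψ) * ψ⁻¹ ∈ p.ker := by
    rw [MonoidHom.mem_ker, map_mul, map_inv, hp_lift, mul_inv_cancel]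
  refine Set.ncard_le_ncard ?_ (Set.toFinite _)
  refine Sassy.support_subset_of_rep h3 (hlen _) (hlift_rep _) (hlift_fix _) hlift
    (fun v' => (hp_restrict ψ v').symm) fun v hv u => (hrespect v _ ⟨_, hker, ?_⟩ u).mp
  change (lift (p ψ)).1 (ψ.1⁻¹ v) = _
  rw [Equiv.Perm.inv_eq_iff_eq.mpr hv.symm]

/-- If the canonical representation mapping R respects kernel
orbits, then for every ψ ∈ Aut(G) with p(ψ) = φ, the support of the lift φ_R
is at most the support of ψ. -/
theorem stmt13 {V C : Type*} [Fintype V] (G : SimpleGraph V) (π : V → C)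
    (V' : Set V) (G' : SimpleGraph V') (π' : V' → C) (R : V → List V)
    (h1 : ∀ v ∈ V', ∃ S : List V, R v = v :: S)
    (h2 : ∀ v ∉ V', R v = [])
    (h3 : ∀ v, v ∉ V' → ∀ (v₁ v₂ : ↥V') (i j : ℕ)
      (hi : i < (R v₁.1).length) (hj : j < (R v₂.1).length),
      (R v₁.1).get ⟨i, hi⟩ = v → (R v₂.1).get ⟨j, hj⟩ = v → v₁ = v₂ ∧ i = j)
    (p : ↥(Sassy.Aut G π) →* ↥(Sassy.Aut G' π'))
    (hp_restrict : ∀ (ψ : ↥(Sassy.Aut G π)) (v' : ↥V'), ((p ψ).1 v').1 = ψ.1 v'.1)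
    (lift : ↥(Sassy.Aut G' π') → ↥(Sassy.Aut G π))
    (hlen : ∀ (φ : ↥(Sassy.Aut G' π')) (v' : ↥V'),
      (R (φ.1 v').1).length = (R v'.1).length)
    (hlift_rep : ∀ (φ : ↥(Sassy.Aut G' π')) (v' : ↥V') (i : ℕ), i < (R v'.1).length →
      (lift φ).1 ((R v'.1).getD i v'.1) = (R (φ.1 v').1).getD i v'.1)
    (hlift_fix : ∀ (φ : ↥(Sassy.Aut G' π')) (v : V), (∀ v' : ↥V', v ∉ R v'.1) →
      (lift φ).1 v = v)
    (hrespect : ∀ v₁ v₂ : V, (∃ k ∈ p.ker, k.1 v₁ = v₂) →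
      ∀ v : V, (v₁ ∈ R v ↔ v₂ ∈ R v)) :
    ∀ (ψ : ↥(Sassy.Aut G π)) (φ : ↥(Sassy.Aut G' π')), p ψ = φ →
      {v : V | (lift φ).1 v ≠ v}.ncard ≤ {v : V | ψ.1 v ≠ v}.ncard :=
  stmt13_general G π V' G' π' R h1 h3 p hp_restrict lift hlen hlift_rep hlift_fix hrespect
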